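/- arXiv:1810.09315 — 11 statements merged into one kernel-verified Lean document; each statement's English description precedes it below -/
import Mathlib

section
/- Let (X, 𝓑) be a measurable space, T : X → X a measurable map, and m a finite measure on X. Assume that for every measurable set A with m(A) > 0 one has ∑_{n≥1} m(T^{-n}(A)) = ∞. Then for every measurable set A, the set {x ∈ A : T^n(x) ∉ A for all n ≥ 1} of points of A that never return to A has m-measure zero. -/
/-!
The points of `A` that never return to `A` form a measurable set `B` none of whose points ever
enters `B` again, so its preimages `T^{-n} B`, `n ≥ 1`, are pairwise disjoint. Their measures
therefore sum to at most `m X < ∞`, and the divergence hypothesis forces `m B = 0`.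
-/

open MeasureTheory

section Wandering

variable {X : Type*} {T : X → X}

theorem pairwise_disjoint_preimage_iterate {B : Set X}
    (hB : ∀ x ∈ B, ∀ n : ℕ, T^[n + 1] x ∉ B) :
    Pairwise (Function.onFun Disjoint fun n : ℕ => T^[n] ⁻¹' B) := by
  refine (pairwise_disjoint_on _).mpr fun i j hij => Set.disjoint_left.mpr fun x hxi hxj => ?_
  obtain ⟨k, rfl⟩ := Nat.exists_eq_add_of_lt hij
  have hreturn : T^[k + 1] (T^[i] x) = T^[i + k + 1] x := by
    rw [← Function.iterate_add_apply]
    congr 1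
    omega
  exact hB _ hxi k (hreturn ▸ hxj)

theorem measurableSet_setOf_forall_iterate_notMem [MeasurableSpace X] (hT : Measurable T)
    {A : Set X} (hA : MeasurableSet A) :
    MeasurableSet {x ∈ A | ∀ n : ℕ, 1 ≤ n → T^[n] x ∉ A} := by
  have hset : {x ∈ A | ∀ n : ℕ, 1 ≤ n → T^[n] x ∉ A} = A ∩ ⋂ n : ℕ, ⋂ _ : 1 ≤ n, T^[n] ⁻¹' Aᶜ := by
    ext x
    simp
  rw [hset]
  exact hA.inter <| .iInter fun n => .iInter fun _ => hT.iterate n hA.compl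

theorem tsum_measure_preimage_iterate_succ_ne_top [MeasurableSpace X] (hT : Measurable T)
    (m : Measure X) [IsFiniteMeasure m] {B : Set X} (hBm : MeasurableSet B)
    (hB : ∀ x ∈ B, ∀ n : ℕ, T^[n + 1] x ∉ B) :
    ∑' n : ℕ, m (T^[n + 1] ⁻¹' B) ≠ ⊤ := by
  have hdisj := (pairwise_disjoint_preimage_iterate hB).comp_of_injective Nat.succ_injective
  refine ne_top_of_le_ne_top (measure_ne_top m Set.univ) (tsum_measure_le_measure_univ ?_ ?_)
  · exact fun n => (hT.iterate (n + 1) hBm).nullMeasurableSet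
  · exact hdisj.mono fun _ _ h => h.aedisjoint

end Wandering

/-- If `T` is a measurable self-map of a measurable space `X` with a finite
measure `m`, and for every measurable set `A` of positive measure the series
`∑_{n ≥ 1} m (T^{-n} A)` diverges, then for every measurable set `A` the set of points of `A`
that never return to `A` has `m`-measure zero. -/
theorem stmt0 {X : Type*} [MeasurableSpace X] (T : X → X) (hT : Measurable T)
    (m : Measure X) [IsFiniteMeasure m]
    (hdiv : ∀ A : Set X, MeasurableSet A → 0 < m A →
      ∑' n : ℕ, m (T^[n + 1] ⁻¹' A) = ⊤) :
    ∀ A : Set X, MeasurableSet A →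
      m {x ∈ A | ∀ n : ℕ, 1 ≤ n → T^[n] x ∉ A} = 0 := by
  intro A hA
  set B := {x ∈ A | ∀ n : ℕ, 1 ≤ n → T^[n] x ∉ A}
  have hBm : MeasurableSet B := measurableSet_setOf_forall_iterate_notMem hT hA
  have hB : ∀ x ∈ B, ∀ n : ℕ, T^[n + 1] x ∉ B := fun x hx n hn => hx.2 (n + 1) n.succ_pos hn.1
  by_contra hpos
  exact tsum_measure_preimage_iterate_succ_ne_top hT m hBm hB
    (hdiv B hBm (pos_iff_ne_zero.mpr hpos))
end

section
/- Let (X, 𝓑) be a measurable space, m a finite measure on X, and κ a Markov kernel from X to X. If condition (main) holds, then for every measurable set A the set {x ∈ A : κ^n x A = 0 for all n ≥ 1} of points of A that never return to A with positive probability has m-measure zero. -/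
open MeasureTheory ProbabilityTheory

/-- `kiter κ n` is the `n`-step kernel of the Markov chain with one-step transition kernel `κ`:
`kiter κ 0 = id` and `kiter κ (n+1) x A = ∫ (kiter κ n) y A d(κ x)(y)`. -/
noncomputable def kiter {X : Type*} [MeasurableSpace X] (κ : Kernel X X) : ℕ → Kernel X X
  | 0 => Kernel.id
  | n + 1 => (kiter κ n) ∘ₖ κ

/-- The `n`-preimage of a set `A`: the set of points from which the chain reaches `A` at time
`n` with positive probability. -/
noncomputable def Qpre {X : Type*} [MeasurableSpace X] (κ : Kernel X X) (n : ℕ) (A : Set X) :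
    Set X := {x : X | 0 < kiter κ n x A}

/-! The non-return set `B` of `A` is measurable and never returns to itself, so every term of the
series in condition (main) for `B` vanishes; the condition therefore forces `m B = 0`. -/

section

variable {X : Type*} [MeasurableSpace X] (κ : Kernel X X)

lemma measurableSet_setOf_forall_kiter_eq_zero {A : Set X} (hA : MeasurableSet A) :
    MeasurableSet {x ∈ A | ∀ n : ℕ, 1 ≤ n → kiter κ n x A = 0} := by
  refine hA.inter (measurableSet_setOfPred.mpr ?_)
  exact .forall fun n => .imp measurable_const
    (measurableSet_setOfPred.mp (Kernel.measurable_coe (kiter κ n) hA (measurableSet_singleton 0)))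

lemma Qpre_inter_eq_empty {n : ℕ} {A B : Set X} (hBA : B ⊆ A)
    (hB : ∀ x ∈ B, kiter κ n x A = 0) : Qpre κ n B ∩ B = ∅ :=
  Set.eq_empty_of_forall_notMem fun x ⟨hxQ, hxB⟩ =>
    (hxQ.trans_le (measure_mono hBA)).ne' (hB x hxB)

end

theorem stmt1_general {X : Type*} [MeasurableSpace X] (m : Measure X)
    (κ : Kernel X X)
    (hmain : ∀ A : Set X, MeasurableSet A → 0 < m A →
      ∑' n : ℕ, m (Qpre κ (n + 1) A ∩ A) = ⊤) :
    ∀ A : Set X, MeasurableSet A →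
      m {x ∈ A | ∀ n : ℕ, 1 ≤ n → kiter κ n x A = 0} = 0 := by
  intro A hA
  set B := {x ∈ A | ∀ n : ℕ, 1 ≤ n → kiter κ n x A = 0}
  by_contra hB
  have hempty (n : ℕ) : Qpre κ (n + 1) B ∩ B = ∅ :=
    Qpre_inter_eq_empty κ (fun _ hx => hx.1) fun _ hx => hx.2 (n + 1) n.succ_pos
  have hsum := hmain B (measurableSet_setOf_forall_kiter_eq_zero κ hA) (pos_iff_ne_zero.mpr hB)
  simp [hempty] at hsum

/-- If condition (main) holds, then for every measurable set `A` the set of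
points of `A` that never return to `A` with positive probability has `m`-measure zero. -/
theorem stmt1 {X : Type*} [MeasurableSpace X] (m : Measure X) [IsFiniteMeasure m]
    (κ : Kernel X X) [IsMarkovKernel κ]
    (hmain : ∀ A : Set X, MeasurableSet A → 0 < m A →
      ∑' n : ℕ, m (Qpre κ (n + 1) A ∩ A) = ⊤) :
    ∀ A : Set X, MeasurableSet A →
      m {x ∈ A | ∀ n : ℕ, 1 ≤ n → kiter κ n x A = 0} = 0 :=
  stmt1_general m κ hmain
end

section
/- Let (X, 𝓑) be a measurable space, m a finite measure on X, and κ a Markov kernel from X to X. Then the chain satisfies PRP(m) if and only if condition (main) holds, i.e. if and only if ∑_{n≥1} m(Q^{-n}(A) ∩ A) = ∞ for every measurable set A with m(A) > 0. -/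
open MeasureTheory ProbabilityTheory

/-- A point `x ∈ A` is Poincaré recurrent with respect to `A` if for every `N` there is
`t ≥ N` with `κ^t x A > 0`. -/
def PoincareRecurrent {X : Type*} [MeasurableSpace X] (κ : Kernel X X) (x : X) (A : Set X) :
    Prop := ∀ N : ℕ, ∃ t : ℕ, N ≤ t ∧ 0 < kiter κ t x A

/-- The chain satisfies `PRP(m)` if for every measurable set `A` the set of points of `A`
that are not Poincaré recurrent with respect to `A` has `m`-measure zero. -/
def PRP {X : Type*} [MeasurableSpace X] (κ : Kernel X X) (m : Measure X) : Prop :=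
  ∀ A : Set X, MeasurableSet A → m {x ∈ A | ¬ PoincareRecurrent κ x A} = 0

/-!
The points of `A` that are Poincaré recurrent with respect to `A` form exactly the limsup of
the sets `Q^{-n}(A) ∩ A`. Hence, if `∑ m (Q^{-n}(A) ∩ A) < ∞`, Borel–Cantelli makes almost every
point of `A` non-recurrent, and PRP forces `m A = 0`. Conversely, the non-recurrent points of `A`
are the union over `N` of the sets `B_N` of points of `A` that never return to `A` after time
`N`; since `Q^{-n}(B_N) ∩ B_N = ∅` for `n ≥ N`, the series for `B_N` is a finite sum of finite
terms, so condition (main) gives `m B_N = 0`.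
-/

open Filter

section

variable {X : Type*} [MeasurableSpace X]

lemma poincareRecurrent_iff_frequently {κ : Kernel X X} {x : X} {A : Set X} :
    PoincareRecurrent κ x A ↔ ∃ᶠ t in atTop, x ∈ Qpre κ t A :=
  frequently_atTop.symm

lemma setOf_poincareRecurrent_eq_limsup (κ : Kernel X X) (A : Set X) :
    {x ∈ A | PoincareRecurrent κ x A} = limsup (fun n => Qpre κ (n + 1) A ∩ A) atTop := by
  ext x
  simp only [Set.mem_ofPred_eq, mem_limsup_iff_frequently_mem, Set.mem_inter_iff,
    frequently_and_distrib_right, poincareRecurrent_iff_frequently]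
  rw [and_comm, ← frequently_map (m := (· + 1)) (P := (x ∈ Qpre κ · A)), map_add_atTop_eq_nat]

def nonReturnSet (κ : Kernel X X) (A : Set X) (N : ℕ) : Set X :=
  {x ∈ A | ∀ t, N ≤ t → kiter κ t x A = 0}

lemma measurableSet_nonReturnSet (κ : Kernel X X) {A : Set X} (hA : MeasurableSet A) (N : ℕ) :
    MeasurableSet (nonReturnSet κ A N) := by
  refine hA.inter ?_
  change MeasurableSet {x | ∀ t, N ≤ t → kiter κ t x A = 0}
  simp only [Set.ofPred_forall]
  exact .iInter fun t => .iInter fun _ =>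
    measurableSet_eq_fun (Kernel.measurable_coe _ hA) measurable_const

lemma setOf_not_poincareRecurrent_eq_iUnion (κ : Kernel X X) (A : Set X) :
    {x ∈ A | ¬ PoincareRecurrent κ x A} = ⋃ N, nonReturnSet κ A N := by
  ext x
  simp [nonReturnSet, PoincareRecurrent]

lemma qpre_inter_nonReturnSet_eq_empty {κ : Kernel X X} {A : Set X} {N n : ℕ} (hn : N ≤ n) :
    Qpre κ n (nonReturnSet κ A N) ∩ nonReturnSet κ A N = ∅ :=
  Set.eq_empty_of_forall_notMem fun _ ⟨hxQ, hxB⟩ =>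
    (hxQ.trans_le (measure_mono fun _ hy => hy.1)).ne' (hxB.2 n hn)

lemma tsum_measure_qpre_inter_nonReturnSet_ne_top (m : Measure X) [IsFiniteMeasure m]
    (κ : Kernel X X) (A : Set X) (N : ℕ) :
    ∑' n : ℕ, m (Qpre κ (n + 1) (nonReturnSet κ A N) ∩ nonReturnSet κ A N) ≠ ⊤ := by
  rw [tsum_eq_sum (s := Finset.range N) fun n hn => ?_]
  · exact ENNReal.sum_ne_top.2 fun n _ => measure_ne_top m _
  · rw [qpre_inter_nonReturnSet_eq_empty (by simp at hn; omega), measure_empty]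

theorem tsum_measure_qpre_inter_eq_top_of_prp {m : Measure X} {κ : Kernel X X} (h : PRP κ m)
    {A : Set X} (hA : MeasurableSet A) (hmA : 0 < m A) :
    ∑' n : ℕ, m (Qpre κ (n + 1) A ∩ A) = ⊤ := by
  by_contra hsum
  have hrec : m {x ∈ A | PoincareRecurrent κ x A} = 0 := by
    rw [setOf_poincareRecurrent_eq_limsup]
    exact measure_limsup_atTop_eq_zero hsum
  refine hmA.ne' (measure_mono_null (fun _ hx => ?_) (measure_union_null hrec (h A hA)))
  exact (em _).imp (⟨hx, ·⟩) (⟨hx, ·⟩)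

theorem prp_of_forall_tsum_measure_qpre_inter_eq_top {m : Measure X} [IsFiniteMeasure m]
    {κ : Kernel X X}
    (h : ∀ A : Set X, MeasurableSet A → 0 < m A → ∑' n : ℕ, m (Qpre κ (n + 1) A ∩ A) = ⊤) :
    PRP κ m := by
  intro A hA
  rw [setOf_not_poincareRecurrent_eq_iUnion]
  refine measure_iUnion_null fun N => ?_
  by_contra hpos
  exact tsum_measure_qpre_inter_nonReturnSet_ne_top m κ A N
    (h _ (measurableSet_nonReturnSet κ hA N) (pos_iff_ne_zero.2 hpos))

end

theorem stmt2_general {X : Type*} [MeasurableSpace X] (m : Measure X) [IsFiniteMeasure m]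
    (κ : Kernel X X) :
    PRP κ m ↔
      (∀ A : Set X, MeasurableSet A → 0 < m A →
        ∑' n : ℕ, m (Qpre κ (n + 1) A ∩ A) = ⊤) :=
  ⟨fun h _ hA hmA => tsum_measure_qpre_inter_eq_top_of_prp h hA hmA,
    prp_of_forall_tsum_measure_qpre_inter_eq_top⟩

/-- **Theorem 1 of the paper.** `PRP(m)` holds if and only if
`∑_{n ≥ 1} m (Q^{-n}(A) ∩ A) = ∞` for every measurable set `A` with `m(A) > 0`. -/
theorem stmt2 {X : Type*} [MeasurableSpace X] (m : Measure X) [IsFiniteMeasure m]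
    (κ : Kernel X X) [IsMarkovKernel κ] :
    PRP κ m ↔
      (∀ A : Set X, MeasurableSet A → 0 < m A →
        ∑' n : ℕ, m (Qpre κ (n + 1) A ∩ A) = ⊤) :=
  stmt2_general m κ
end

section
/- Let X be a compact metric space with its Borel σ-algebra, m a finite Borel measure on X, and κ a Markov kernel from X to X satisfying condition (main). Then m-almost every point x ∈ X is topologically recurrent: for every open set U containing x and every N there exists t ≥ N with κ^t x U > 0. -/
/-!
The points of `A` from which the chain reaches `A` with probability zero at every time `t ≥ N`
form a measurable set `F ⊆ A` with `Q^{-(n+1)}(F) ∩ F = ∅` for `n ≥ N`. So the series of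
condition (main) for `F` has only finitely many nonzero terms, each finite as `m` is finite, and
`m F = 0`. The union of these sets over a countable basis and all `N` is a null set outside which
every point is topologically recurrent.
-/

open MeasureTheory ProbabilityTheory

namespace ProbabilityTheory.Kernel

variable {X : Type*} [MeasurableSpace X] (κ : Kernel X X)

def nonReturnSet (A : Set X) (N : ℕ) : Set X :=
  {x | x ∈ A ∧ ∀ t, N ≤ t → kiter κ t x A = 0}

variable {κ}

lemma nonReturnSet_subset (A : Set X) (N : ℕ) : nonReturnSet κ A N ⊆ A :=
  fun _ hx => hx.1

lemma measurableSet_nonReturnSet {A : Set X} (hA : MeasurableSet A) (N : ℕ) :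
    MeasurableSet (nonReturnSet κ A N) := by
  have h : nonReturnSet κ A N = A ∩ ⋂ t, ⋂ (_ : N ≤ t), (fun x => kiter κ t x A) ⁻¹' {0} := by
    ext x
    simp [nonReturnSet]
  rw [h]
  exact hA.inter <| .iInter fun t => .iInter fun _ =>
    Kernel.measurable_coe _ hA (measurableSet_singleton 0)

lemma Qpre_succ_inter_nonReturnSet_eq_empty (A : Set X) {N n : ℕ} (hn : N ≤ n) :
    Qpre κ (n + 1) (nonReturnSet κ A N) ∩ nonReturnSet κ A N = ∅ := by
  refine Set.eq_empty_of_forall_notMem fun x ⟨hxQ, hxF⟩ => ?_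
  have hreach : kiter κ (n + 1) x (nonReturnSet κ A N) ≤ kiter κ (n + 1) x A :=
    measure_mono (nonReturnSet_subset A N)
  rw [hxF.2 (n + 1) (by omega)] at hreach
  exact (hxQ.trans_le hreach).ne' rfl

lemma tsum_measure_Qpre_succ_inter_nonReturnSet_ne_top (m : Measure X) [IsFiniteMeasure m]
    (A : Set X) (N : ℕ) :
    ∑' n : ℕ, m (Qpre κ (n + 1) (nonReturnSet κ A N) ∩ nonReturnSet κ A N) ≠ ⊤ := by
  rw [tsum_eq_sum (s := Finset.range N) fun n hn => by
    rw [Qpre_succ_inter_nonReturnSet_eq_empty A (by simpa using hn), measure_empty]]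
  exact ENNReal.sum_ne_top.2 fun n _ => measure_ne_top m _

lemma measure_nonReturnSet_eq_zero (m : Measure X) [IsFiniteMeasure m]
    (hmain : ∀ A : Set X, MeasurableSet A → 0 < m A →
      ∑' n : ℕ, m (Qpre κ (n + 1) A ∩ A) = ⊤)
    {A : Set X} (hA : MeasurableSet A) (N : ℕ) :
    m (nonReturnSet κ A N) = 0 := by
  by_contra hpos
  exact tsum_measure_Qpre_succ_inter_nonReturnSet_ne_top m A N <|
    hmain _ (measurableSet_nonReturnSet hA N) (pos_iff_ne_zero.2 hpos)

lemma exists_kiter_pos_of_forall_notMem_nonReturnSet [TopologicalSpace X]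
    {b : Set (Set X)} (hb : TopologicalSpace.IsTopologicalBasis b) {x : X}
    (hx : ∀ B ∈ b, ∀ N, x ∉ nonReturnSet κ B N) {U : Set X} (hU : IsOpen U) (hxU : x ∈ U)
    (N : ℕ) : ∃ t, N ≤ t ∧ 0 < kiter κ t x U := by
  obtain ⟨B, hBb, hxB, hBU⟩ := hb.exists_subset_of_mem_open hxU hU
  have hreturn : ∃ t, N ≤ t ∧ kiter κ t x B ≠ 0 := by
    by_contra! h
    exact hx B hBb N ⟨hxB, h⟩
  obtain ⟨t, hNt, ht⟩ := hreturn
  exact ⟨t, hNt, (pos_iff_ne_zero.2 ht).trans_le (measure_mono hBU)⟩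

end ProbabilityTheory.Kernel

theorem stmt3_general {X : Type*} [MetricSpace X] [CompactSpace X]
    [MeasurableSpace X] [BorelSpace X]
    (m : Measure X) [IsFiniteMeasure m] (κ : Kernel X X)
    (hmain : ∀ A : Set X, MeasurableSet A → 0 < m A →
      ∑' n : ℕ, m (Qpre κ (n + 1) A ∩ A) = ⊤) :
    ∀ᵐ x ∂m, ∀ U : Set X, IsOpen U → x ∈ U →
      ∀ N : ℕ, ∃ t : ℕ, N ≤ t ∧ 0 < kiter κ t x U := by
  obtain ⟨b, hbc, -, hb⟩ := TopologicalSpace.exists_countable_basis X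
  have hgood : ∀ᵐ x ∂m, ∀ B ∈ b, ∀ N, x ∉ Kernel.nonReturnSet κ B N :=
    (ae_ball_iff hbc).2 fun B hB => ae_all_iff.2 fun N =>
      measure_eq_zero_iff_ae_notMem.1 <|
        Kernel.measure_nonReturnSet_eq_zero m hmain (hb.isOpen hB).measurableSet N
  filter_upwards [hgood] with x hx U hU hxU N
  exact Kernel.exists_kiter_pos_of_forall_notMem_nonReturnSet hb hx hU hxU N

/-- **Theorem 2, topological part.** On a compact metric space with a finite Borel
measure `m` satisfying condition (main), `m`-almost every point is topologically recurrent. -/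
theorem stmt3 {X : Type*} [MetricSpace X] [CompactSpace X]
    [MeasurableSpace X] [BorelSpace X]
    (m : Measure X) [IsFiniteMeasure m] (κ : Kernel X X) [IsMarkovKernel κ]
    (hmain : ∀ A : Set X, MeasurableSet A → 0 < m A →
      ∑' n : ℕ, m (Qpre κ (n + 1) A ∩ A) = ⊤) :
    ∀ᵐ x ∂m, ∀ U : Set X, IsOpen U → x ∈ U →
      ∀ N : ℕ, ∃ t : ℕ, N ≤ t ∧ 0 < kiter κ t x U :=
  stmt3_general m κ hmain
end

section
/- Let X be a second-countable topological space equipped with its Borel σ-algebra, m a finite Borel measure on X, and κ a Markov kernel from X to X. Assume that for every measurable set A the set {x ∈ A : κ^n x A = 0 for all n ≥ 1} has m-measure zero. Then for m-almost every x ∈ X the following holds: for every open set U containing x there exists n ≥ 1 with κ^n x U > 0. -/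
open MeasureTheory ProbabilityTheory

/-! Apply the hypothesis to each member of a countable basis: the countably many exceptional
sets are null together, and any open `U ∋ x` contains a basic `B ∋ x`, to which a point outside
the exceptional sets returns with positive probability, hence also to `U`. -/

theorem ae_forall_mem_exists_kiter_pos {X : Type*} [MeasurableSpace X] (m : Measure X)
    (κ : Kernel X X) {S : Set (Set X)} (hS : S.Countable)
    (hPRP : ∀ A ∈ S, m {x ∈ A | ∀ n : ℕ, 1 ≤ n → kiter κ n x A = 0} = 0) :
    ∀ᵐ x ∂m, ∀ A ∈ S, x ∈ A → ∃ n : ℕ, 1 ≤ n ∧ 0 < kiter κ n x A := by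
  refine (ae_ball_iff hS).mpr fun A hA => ?_
  filter_upwards [measure_eq_zero_iff_ae_notMem.mp (hPRP A hA)] with x hx hxA
  by_contra! h
  exact hx ⟨hxA, fun n hn => nonpos_iff_eq_zero.mp (h n hn)⟩

theorem stmt5_general {X : Type*} [TopologicalSpace X] [SecondCountableTopology X]
    [MeasurableSpace X] [BorelSpace X]
    (m : Measure X) (κ : Kernel X X)
    (hPRP : ∀ A : Set X, MeasurableSet A →
      m {x ∈ A | ∀ n : ℕ, 1 ≤ n → kiter κ n x A = 0} = 0) :
    ∀ᵐ x ∂m, ∀ U : Set X, IsOpen U → x ∈ U →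
      ∃ n : ℕ, 1 ≤ n ∧ 0 < kiter κ n x U := by
  have hbasis := TopologicalSpace.isBasis_countableBasis X
  filter_upwards [ae_forall_mem_exists_kiter_pos m κ (TopologicalSpace.countable_countableBasis X)
    fun B hB => hPRP B (TopologicalSpace.isOpen_of_mem_countableBasis hB).measurableSet]
    with x hx U hU hxU
  obtain ⟨B, hB, hxB, hBU⟩ := hbasis.exists_subset_of_mem_open hxU hU
  obtain ⟨n, hn, hpos⟩ := hx B hB hxB
  exact ⟨n, hn, hpos.trans_le (measure_mono hBU)⟩

/-- On a second-countable topological space with a finite Borel measure `m`,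
if for every measurable set `A` the set of points of `A` that never return to `A` with positive
probability is `m`-null, then `m`-almost every point is topologically recurrent. -/
theorem stmt5 {X : Type*} [TopologicalSpace X] [SecondCountableTopology X]
    [MeasurableSpace X] [BorelSpace X]
    (m : Measure X) [IsFiniteMeasure m] (κ : Kernel X X) [IsMarkovKernel κ]
    (hPRP : ∀ A : Set X, MeasurableSet A →
      m {x ∈ A | ∀ n : ℕ, 1 ≤ n → kiter κ n x A = 0} = 0) :
    ∀ᵐ x ∂m, ∀ U : Set X, IsOpen U → x ∈ U →
      ∃ n : ℕ, 1 ≤ n ∧ 0 < kiter κ n x U :=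
  stmt5_general m κ hPRP
end

section
/- Let X be a second-countable topological space equipped with its Borel σ-algebra, m a finite Borel measure on X, and κ a Markov kernel from X to X such that the topological image Q(A) is measurable for every measurable set A. If the backward conservativity property holds — for every measurable set A with Q^{-1}(A) ⊆ A one has m(A \ Q^{-1}(A)) = 0 — then the forward conservativity property holds: for every measurable set A with Q(A) ⊆ A one has m(A \ Q(A)) = 0. -/
open MeasureTheory ProbabilityTheory

/-- The topological image of a set `A` under the chain:
`Q(A) = {y | ∃ x ∈ A, κ x U > 0 for every open U ∋ y}`. -/
noncomputable def Qimg {X : Type*} [TopologicalSpace X] [MeasurableSpace X]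
    (κ : Kernel X X) (A : Set X) : Set X :=
  {y : X | ∃ x ∈ A, ∀ U : Set X, IsOpen U → y ∈ U → 0 < κ x U}

/-- The `1`-preimage of a set `A` under the chain: `Q^{-1}(A) = {x | κ x A > 0}`. -/
noncomputable def Qpre1 {X : Type*} [MeasurableSpace X] (κ : Kernel X X) (A : Set X) :
    Set X := {x : X | 0 < κ x A}

/-! For `C = Q(A)`, every `x ∈ A` puts full mass on `C`, since `C` contains the support of
`κ x` and supports are conull in second-countable spaces. Hence `Q⁻¹(Cᶜ)` misses `A ⊇ C`, so
`Cᶜ` is backward invariant, and backward conservativity applied to `Cᶜ` kills `A \ C`,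
which lies in `Cᶜ \ Q⁻¹(Cᶜ)`. -/

section

variable {X : Type*} [TopologicalSpace X] [MeasurableSpace X] (κ : Kernel X X) {A : Set X}

lemma support_subset_Qimg {x : X} (hx : x ∈ A) : (κ x).support ⊆ Qimg κ A :=
  fun y hy => ⟨x, hx, fun U hU hyU => (Measure.mem_support_iff_forall y).1 hy U (hU.mem_nhds hyU)⟩

lemma measure_compl_Qimg_eq_zero [HereditarilyLindelofSpace X] {x : X} (hx : x ∈ A) :
    κ x (Qimg κ A)ᶜ = 0 :=
  measure_mono_null (Set.compl_subset_compl.2 (support_subset_Qimg κ hx))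
    Measure.measure_compl_support

lemma disjoint_Qpre1_compl_Qimg [HereditarilyLindelofSpace X] :
    Disjoint A (Qpre1 κ (Qimg κ A)ᶜ) :=
  Set.disjoint_left.2 fun _ hx hpos => hpos.ne' (measure_compl_Qimg_eq_zero κ hx)

end

theorem stmt8_general {X : Type*} [TopologicalSpace X] [SecondCountableTopology X]
    [MeasurableSpace X]
    (m : Measure X) (κ : Kernel X X)
    (hQmeas : ∀ A : Set X, MeasurableSet A → MeasurableSet (Qimg κ A))
    (hback : ∀ A : Set X, MeasurableSet A → Qpre1 κ A ⊆ A → m (A \ Qpre1 κ A) = 0) :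
    ∀ A : Set X, MeasurableSet A → Qimg κ A ⊆ A → m (A \ Qimg κ A) = 0 := by
  intro A hA hQA
  have hdisj : Disjoint A (Qpre1 κ (Qimg κ A)ᶜ) := disjoint_Qpre1_compl_Qimg κ
  have hinv : Qpre1 κ (Qimg κ A)ᶜ ⊆ (Qimg κ A)ᶜ :=
    fun x hx hxC => Set.disjoint_left.1 hdisj (hQA hxC) hx
  have hsub : A \ Qimg κ A ⊆ (Qimg κ A)ᶜ \ Qpre1 κ (Qimg κ A)ᶜ :=
    fun x hx => ⟨hx.2, Set.disjoint_left.1 hdisj hx.1⟩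
  exact measure_mono_null hsub (hback _ (hQmeas A hA).compl hinv)

/-- **Theorem 3(c).** Assuming the topological image of every measurable set is
measurable, backward conservativity implies forward conservativity. -/
theorem stmt8 {X : Type*} [TopologicalSpace X] [SecondCountableTopology X]
    [MeasurableSpace X] [BorelSpace X]
    (m : Measure X) [IsFiniteMeasure m] (κ : Kernel X X) [IsMarkovKernel κ]
    (hQmeas : ∀ A : Set X, MeasurableSet A → MeasurableSet (Qimg κ A))
    (hback : ∀ A : Set X, MeasurableSet A → Qpre1 κ A ⊆ A → m (A \ Qpre1 κ A) = 0) :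
    ∀ A : Set X, MeasurableSet A → Qimg κ A ⊆ A → m (A \ Qimg κ A) = 0 :=
  stmt8_general m κ hQmeas hback
end

section
/- There exists a Markov kernel κ on the unit interval [0,1] (with Borel σ-algebra and Lebesgue measure m) such that: (i) for every nonempty set A ⊆ [0,1] and every n ≥ 1 the n-fold topological image Q^n(A) equals [0,1], hence ∑_{n≥1} m(Q^n(A) ∩ A) = ∞ for every measurable A with m(A) > 0; and yet (ii) there exists a measurable set A with m(A) > 0 such that κ^t x A = 0 for every x ∈ [0,1] and every t ≥ 1, so PRP(m) fails. -/
/-!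
Take for `κ` the constant kernel `x ↦ μ`, where `μ` puts mass `2^{-(n+1)}` on the `n`-th point
of a countable dense subset `D` of `[0,1]`. Every open set has positive `μ`-mass, so the
topological image of any nonempty set is everything; but `κ^t = κ` for `t ≥ 1`, so the chain never
charges the Lebesgue-conull set `[0,1] \ D`, and no point of it is recurrent.
-/

open MeasureTheory ProbabilityTheory

/-- Lebesgue measure on the unit interval `[0,1]`, viewed as a measure on the subtype. -/
noncomputable def lebOnI : Measure (Set.Icc (0 : ℝ) 1) :=
  (volume : Measure ℝ).comap Subtype.val

open Set TopologicalSpace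
open scoped ENNReal

section DiracSeries

variable {X : Type*} [MeasurableSpace X]

noncomputable def diracSeries (q : ℕ → X) : Measure X :=
  Measure.sum fun n ↦ (2⁻¹ : ℝ≥0∞) ^ (n + 1) • Measure.dirac (q n)

instance isProbabilityMeasure_diracSeries (q : ℕ → X) : IsProbabilityMeasure (diracSeries q) :=
  HasSum.isProbabilityMeasure_sum_dirac_ennreal <| by
    simpa [ENNReal.tsum_geometric_add_one, ENNReal.one_sub_inv_two, ENNReal.inv_mul_cancel] using
      ENNReal.summable.hasSum (f := fun n : ℕ ↦ (2⁻¹ : ℝ≥0∞) ^ (n + 1))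

lemma diracSeries_compl_range [MeasurableSingletonClass X] (q : ℕ → X) :
    diracSeries q (range q)ᶜ = 0 := by
  have hmeas : MeasurableSet (range q)ᶜ := (countable_range q).measurableSet.compl
  simp [diracSeries, Measure.sum_apply _ hmeas, Measure.dirac_apply' _ hmeas]

lemma isOpenPosMeasure_diracSeries [TopologicalSpace X] [OpensMeasurableSpace X] {q : ℕ → X}
    (hq : DenseRange q) : (diracSeries q).IsOpenPosMeasure where
  open_pos U hU hne := by
    obtain ⟨n, hn⟩ := hq.exists_mem_open hU hne
    refine (lt_of_lt_of_le ?_ (Measure.le_sum _ n U)).ne'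
    simpa [Measure.dirac_apply' _ hU.measurableSet, hn] using ENNReal.pow_pos (by simp) _

end DiracSeries

section ConstKernel

variable {X : Type*} [MeasurableSpace X]

lemma kiter_const_succ (μ : Measure X) [IsProbabilityMeasure μ] (n : ℕ) :
    kiter (Kernel.const X μ) (n + 1) = Kernel.const X μ := by
  induction n with
  | zero => exact Kernel.id_comp _
  | succ n ih => rw [kiter, ih, Kernel.const_comp']

lemma Qimg_const [TopologicalSpace X] (μ : Measure X) [μ.IsOpenPosMeasure] {A : Set X}
    (hA : A.Nonempty) : Qimg (Kernel.const X μ) A = univ :=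
  eq_univ_of_forall fun y ↦
    ⟨hA.some, hA.some_mem, fun _ hU hy ↦ hU.measure_pos μ ⟨y, hy⟩⟩

lemma iterate_Qimg_const_succ [TopologicalSpace X] (μ : Measure X) [μ.IsOpenPosMeasure]
    {A : Set X} (hA : A.Nonempty) (n : ℕ) : (Qimg (Kernel.const X μ))^[n + 1] A = univ := by
  induction n with
  | zero => exact Qimg_const μ hA
  | succ n ih =>
    rw [Function.iterate_succ_apply', ih]
    exact Qimg_const μ ⟨hA.some, mem_univ _⟩

end ConstKernel

lemma not_PRP_of_kiter_eq_zero {X : Type*} [MeasurableSpace X] {κ : Kernel X X} {m : Measure X}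
    {A : Set X} (hA : MeasurableSet A) (hmA : m A ≠ 0)
    (hκ : ∀ x, ∀ t, 1 ≤ t → kiter κ t x A = 0) : ¬ PRP κ m := by
  intro hPRP
  have hnonrec : {x ∈ A | ¬ PoincareRecurrent κ x A} = A :=
    sep_eq_self_iff_mem_true.2 fun x _ hrec ↦ by
      obtain ⟨t, ht, hpos⟩ := hrec 1
      exact hpos.ne' (hκ x t ht)
  exact hmA (hnonrec ▸ hPRP A hA)

lemma lebOnI_eq_volume : lebOnI = (volume : Measure unitInterval) := rfl

lemma lebOnI_compl_of_countable {s : Set (Icc (0 : ℝ) 1)} (hs : s.Countable) :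
    lebOnI sᶜ = 1 := by
  rw [lebOnI_eq_volume, prob_compl_eq_one_iff hs.measurableSet]
  exact hs.measure_zero _

/-- There is a Markov kernel on `[0,1]` (with Lebesgue measure `m`) whose
`n`-fold topological image of every nonempty set is all of `[0,1]` (so that
`∑_{n≥1} m (Q^n(A) ∩ A) = ∞` whenever `m A > 0`), and yet some measurable set `A` with
`m A > 0` satisfies `κ^t x A = 0` for all `x` and all `t ≥ 1`, so `PRP(m)` fails. -/
theorem stmt10 :
    ∃ κ : Kernel (Set.Icc (0 : ℝ) 1) (Set.Icc (0 : ℝ) 1), IsMarkovKernel κ ∧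
      (∀ A : Set (Set.Icc (0 : ℝ) 1), A.Nonempty →
        ∀ n : ℕ, 1 ≤ n → (Qimg κ)^[n] A = Set.univ) ∧
      (∀ A : Set (Set.Icc (0 : ℝ) 1), MeasurableSet A → 0 < lebOnI A →
        ∑' n : ℕ, lebOnI ((Qimg κ)^[n + 1] A ∩ A) = ⊤) ∧
      (∃ A : Set (Set.Icc (0 : ℝ) 1), MeasurableSet A ∧ 0 < lebOnI A ∧
        ∀ x : Set.Icc (0 : ℝ) 1, ∀ t : ℕ, 1 ≤ t → kiter κ t x A = 0) ∧
      ¬ PRP κ lebOnI := by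
  set q := denseSeq (Icc (0 : ℝ) 1)
  have := isOpenPosMeasure_diracSeries (denseRange_denseSeq (Icc (0 : ℝ) 1))
  set κ := Kernel.const (Icc (0 : ℝ) 1) (diracSeries q)
  have hD : MeasurableSet (range q)ᶜ := (countable_range q).measurableSet.compl
  have hmD : lebOnI (range q)ᶜ ≠ 0 := by
    rw [lebOnI_compl_of_countable (countable_range q)]
    exact one_ne_zero
  have hκD : ∀ x, ∀ t, 1 ≤ t → kiter κ t x (range q)ᶜ = 0 := fun x t ht ↦ by
    obtain ⟨n, rfl⟩ := Nat.exists_eq_add_of_le' ht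
    rw [kiter_const_succ, Kernel.const_apply, diracSeries_compl_range]
  refine ⟨κ, inferInstance, fun A hA n hn ↦ ?_, fun A _ hpos ↦ ?_,
    ⟨_, hD, pos_iff_ne_zero.2 hmD, hκD⟩, not_PRP_of_kiter_eq_zero hD hmD hκD⟩
  · obtain ⟨n, rfl⟩ := Nat.exists_eq_add_of_le' hn
    exact iterate_Qimg_const_succ _ hA n
  · have hQ (n : ℕ) : (Qimg κ)^[n + 1] A = univ :=
      iterate_Qimg_const_succ _ (nonempty_of_measure_ne_zero hpos.ne') n
    simp_rw [hQ, univ_inter]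
    exact ENNReal.tsum_const_eq_top_of_ne_zero hpos.ne'
end

section
/- Let (X, 𝓑), m, X₁, X₂ and κ be as in the two-component example. Then for every measurable set B ⊆ X₁, every x ∈ X and every t ≥ 1 one has κ^t x B < 1. In particular, no point of X is strongly Poincaré recurrent with respect to any measurable subset of X₁. -/
/-!
Whatever the current state, one step of `κ` lands in `X₁` with probability at most `1/2`:
from `X₁` half of the mass moves to `X₂`, and from `X₂` nothing returns. Conditioning a
`t`-step transition on its first `t - 1` steps, the last step alone already bounds the
probability of ending in `B ⊆ X₁` by `1/2`.
-/

open MeasureTheory ProbabilityTheory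

lemma Kernel.comp_apply_le_of_forall_le {X Y Z : Type*} [MeasurableSpace X] [MeasurableSpace Y]
    [MeasurableSpace Z] {η : Kernel Y Z} {κ : Kernel X Y} [IsMarkovKernel κ] {B : Set Z}
    (hB : MeasurableSet B) {c : ENNReal} (h : ∀ y, η y B ≤ c) (x : X) : (η ∘ₖ κ) x B ≤ c :=
  calc (η ∘ₖ κ) x B = ∫⁻ y, η y B ∂(κ x) := Kernel.comp_apply' _ _ _ hB
    _ ≤ ∫⁻ _, c ∂(κ x) := lintegral_mono h
    _ = c := by simp

lemma kiter_apply_le_of_forall_le {X : Type*} [MeasurableSpace X] {κ : Kernel X X}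
    [IsMarkovKernel κ] {B : Set X} (hB : MeasurableSet B) {c : ENNReal} (h : ∀ x, κ x B ≤ c)
    {t : ℕ} (ht : 1 ≤ t) (x : X) : kiter κ t x B ≤ c := by
  induction t, ht using Nat.le_induction generalizing x with
  | base => simpa [kiter] using h x
  | succ t _ ih => exact Kernel.comp_apply_le_of_forall_le hB ih x

lemma measure_div_two_mul_measure_le_inv_two {X : Type*} [MeasurableSpace X] (m : Measure X) {B A : Set X}
    (hBA : B ⊆ A) : m B / (2 * m A) ≤ 2⁻¹ := by
  refine ENNReal.div_le_of_le_mul ?_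
  rw [← mul_assoc, ENNReal.inv_mul_cancel two_ne_zero ENNReal.ofNat_ne_top, one_mul]
  exact measure_mono hBA

theorem stmt12_general {X : Type*} [MeasurableSpace X] (m : Measure X)
    (X₁ X₂ : Set X)
    (hdisj : Disjoint X₁ X₂) (hunion : X₁ ∪ X₂ = Set.univ)
    (κ : Kernel X X) [IsMarkovKernel κ]
    (hκ₁ : ∀ x ∈ X₁, ∀ B : Set X, MeasurableSet B →
      κ x B = m (B ∩ X₁) / (2 * m X₁) + m (B ∩ X₂) / (2 * m X₂))
    (hκ₂ : ∀ x ∈ X₂, ∀ B : Set X, MeasurableSet B → κ x B = m (B ∩ X₂) / m X₂) :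
    ∀ B : Set X, MeasurableSet B → B ⊆ X₁ →
      (∀ x : X, ∀ t : ℕ, 1 ≤ t → kiter κ t x B < 1) ∧
        ∀ x : X, ¬ ∃ t : ℕ, 1 ≤ t ∧ kiter κ t x B = 1 := by
  intro B hB hBX₁
  have hBX₂ : B ∩ X₂ = ∅ := (hdisj.mono_left hBX₁).inter_eq
  have hstep : ∀ x, κ x B ≤ 2⁻¹ := by
    intro x
    rcases (hunion.symm ▸ Set.mem_univ x : x ∈ X₁ ∪ X₂) with hx | hx
    · rw [hκ₁ x hx B hB, hBX₂, measure_empty, ENNReal.zero_div, add_zero]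
      exact measure_div_two_mul_measure_le_inv_two m Set.inter_subset_right
    · simp [hκ₂ x hx B hB, hBX₂]
  have hlt : ∀ x t, 1 ≤ t → kiter κ t x B < 1 := fun x t ht =>
    (kiter_apply_le_of_forall_le hB hstep ht x).trans_lt (by norm_num)
  exact ⟨hlt, fun x ⟨t, ht, h⟩ => (hlt x t ht).ne h⟩

/-- **Example 5, second part.** In the two-component example, for every
measurable `B ⊆ X₁`, every `x ∈ X` and every `t ≥ 1` one has `κ^t x B < 1`; in particular no
point of `X` is strongly Poincaré recurrent with respect to any measurable subset of `X₁`. -/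
theorem stmt12 {X : Type*} [MeasurableSpace X] (m : Measure X) [IsFiniteMeasure m]
    (X₁ X₂ : Set X) (hX₁ : MeasurableSet X₁) (hX₂ : MeasurableSet X₂)
    (hdisj : Disjoint X₁ X₂) (hunion : X₁ ∪ X₂ = Set.univ)
    (hm₁ : 0 < m X₁) (hm₂ : 0 < m X₂)
    (κ : Kernel X X) [IsMarkovKernel κ]
    (hκ₁ : ∀ x ∈ X₁, ∀ B : Set X, MeasurableSet B →
      κ x B = m (B ∩ X₁) / (2 * m X₁) + m (B ∩ X₂) / (2 * m X₂))
    (hκ₂ : ∀ x ∈ X₂, ∀ B : Set X, MeasurableSet B → κ x B = m (B ∩ X₂) / m X₂) :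
    ∀ B : Set X, MeasurableSet B → B ⊆ X₁ →
      (∀ x : X, ∀ t : ℕ, 1 ≤ t → kiter κ t x B < 1) ∧
        ∀ x : X, ¬ ∃ t : ℕ, 1 ≤ t ∧ kiter κ t x B = 1 :=
  stmt12_general m X₁ X₂ hdisj hunion κ hκ₁ hκ₂
end

section
/- Let (X, 𝓑), m, X₁, X₂ and κ be as in the two-component example. Then for every measurable set A ⊆ X₁ one has (κ^n m)(A) = 2^{-n}·m(A) for all n ≥ 1, and consequently ∑_{n≥1} (κ^n m)(A) = m(A) < ∞. -/
/-!
Started in `X₁`, the chain stays in `X₁` with probability `1/2` at each step, and from `X₂` it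
never enters `X₁` again. So for `A ⊆ X₁` the `(n+1)`-step kernel is
`κⁿ⁺¹ x A = 𝟙_{X₁}(x) · m A / (2 m X₁) · 2⁻ⁿ`, integrating against `m` gives
`m A / 2ⁿ⁺¹`, and the series is geometric.
-/

open MeasureTheory ProbabilityTheory

open scoped ENNReal

lemma ENNReal.tsum_div_two_pow_succ (a : ℝ≥0∞) : ∑' n : ℕ, a / 2 ^ (n + 1) = a := by
  simp only [div_eq_mul_inv, ENNReal.inv_pow]
  rw [ENNReal.tsum_mul_left, ENNReal.tsum_geometric_add_one, ENNReal.one_sub_inv_two, inv_inv,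
    ENNReal.inv_mul_cancel two_ne_zero ENNReal.ofNat_ne_top, mul_one]

lemma ENNReal.div_two_mul_mul_inv_two_pow_mul {a : ℝ≥0∞} (ha₀ : a ≠ 0) (ha : a ≠ ∞)
    (b : ℝ≥0∞) (n : ℕ) : b / (2 * a) * 2⁻¹ ^ n * a = b / 2 ^ (n + 1) := by
  rw [mul_right_comm, ← ENNReal.mul_div_right_comm, ENNReal.mul_div_mul_right _ _ ha₀ ha,
    div_eq_mul_inv, div_eq_mul_inv, ENNReal.inv_pow, pow_succ', mul_assoc]

section Iterates

variable {X : Type*} [MeasurableSpace X] {κ : Kernel X X}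

lemma kiter_succ (κ : Kernel X X) (n : ℕ) : kiter κ (n + 1) = kiter κ n ∘ₖ κ := rfl

lemma kiter_one (κ : Kernel X X) : kiter κ 1 = κ := Kernel.id_comp κ

lemma kiter_succ_apply_eq_indicator {S A : Set X} (hS : MeasurableSet S) (hA : MeasurableSet A)
    {p c : ℝ≥0∞} (hκS : ∀ x, κ x S = S.indicator (fun _ ↦ p) x)
    (hκA : ∀ x, κ x A = S.indicator (fun _ ↦ c) x) (n : ℕ) (x : X) :
    kiter κ (n + 1) x A = S.indicator (fun _ ↦ c * p ^ n) x := by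
  induction n generalizing x with
  | zero => simp [kiter_one, hκA]
  | succ n ih =>
    rw [kiter_succ, Kernel.comp_apply' _ _ _ hA, lintegral_congr ih, lintegral_indicator_const hS,
      hκS]
    by_cases hx : x ∈ S <;> simp [hx, pow_succ, mul_assoc]

lemma bind_kiter_succ_apply_eq {S A : Set X} (hS : MeasurableSet S) (hA : MeasurableSet A)
    {p c : ℝ≥0∞} (hκS : ∀ x, κ x S = S.indicator (fun _ ↦ p) x)
    (hκA : ∀ x, κ x A = S.indicator (fun _ ↦ c) x) (m : Measure X) (n : ℕ) :
    m.bind (kiter κ (n + 1)) A = c * p ^ n * m S := by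
  rw [Measure.bind_apply hA (kiter κ _).aemeasurable,
    lintegral_congr (kiter_succ_apply_eq_indicator hS hA hκS hκA n), lintegral_indicator_const hS]

end Iterates

lemma twoComponent_apply_of_subset {X : Type*} [MeasurableSpace X] {m : Measure X}
    {X₁ X₂ : Set X} {κ : Kernel X X} (hdisj : Disjoint X₁ X₂) (hunion : X₁ ∪ X₂ = Set.univ)
    (hκ₁ : ∀ x ∈ X₁, ∀ B : Set X, MeasurableSet B →
      κ x B = m (B ∩ X₁) / (2 * m X₁) + m (B ∩ X₂) / (2 * m X₂))
    (hκ₂ : ∀ x ∈ X₂, ∀ B : Set X, MeasurableSet B → κ x B = m (B ∩ X₂) / m X₂)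
    {B : Set X} (hB : MeasurableSet B) (hBX₁ : B ⊆ X₁) (x : X) :
    κ x B = X₁.indicator (fun _ ↦ m B / (2 * m X₁)) x := by
  have hBX₂ : B ∩ X₂ = ∅ := (hdisj.mono_left hBX₁).inter_eq
  by_cases hx : x ∈ X₁
  · rw [hκ₁ x hx B hB, Set.inter_eq_left.mpr hBX₁, hBX₂, Set.indicator_of_mem hx]
    simp
  · have hx₂ : x ∈ X₂ :=
      ((Set.mem_union x X₁ X₂).mp (hunion ▸ Set.mem_univ x)).resolve_left hx
    rw [hκ₂ x hx₂ B hB, hBX₂, Set.indicator_of_notMem hx]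
    simp

theorem stmt13_general {X : Type*} [MeasurableSpace X] (m : Measure X) [IsFiniteMeasure m]
    (X₁ X₂ : Set X) (hX₁ : MeasurableSet X₁)
    (hdisj : Disjoint X₁ X₂) (hunion : X₁ ∪ X₂ = Set.univ)
    (hm₁ : 0 < m X₁)
    (κ : Kernel X X)
    (hκ₁ : ∀ x ∈ X₁, ∀ B : Set X, MeasurableSet B →
      κ x B = m (B ∩ X₁) / (2 * m X₁) + m (B ∩ X₂) / (2 * m X₂))
    (hκ₂ : ∀ x ∈ X₂, ∀ B : Set X, MeasurableSet B → κ x B = m (B ∩ X₂) / m X₂) :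
    ∀ A : Set X, MeasurableSet A → A ⊆ X₁ →
      (∀ n : ℕ, 1 ≤ n → (m.bind (kiter κ n)) A = m A / 2 ^ n) ∧
        (∑' n : ℕ, (m.bind (kiter κ (n + 1))) A = m A) ∧ m A < ⊤ := by
  intro A hA hAX₁
  have hκX₁ := twoComponent_apply_of_subset hdisj hunion hκ₁ hκ₂ hX₁ subset_rfl
  have hκA := twoComponent_apply_of_subset hdisj hunion hκ₁ hκ₂ hA hAX₁
  have hhalf : m X₁ / (2 * m X₁) = 2⁻¹ := by
    simpa using ENNReal.mul_div_mul_right 1 2 hm₁.ne' (measure_ne_top m X₁)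
  rw [hhalf] at hκX₁
  have hbind (k : ℕ) : m.bind (kiter κ (k + 1)) A = m A / 2 ^ (k + 1) := by
    rw [bind_kiter_succ_apply_eq hX₁ hA hκX₁ hκA,
      ENNReal.div_two_mul_mul_inv_two_pow_mul hm₁.ne' (measure_ne_top m X₁)]
  refine ⟨fun n hn ↦ ?_, by simp only [hbind, ENNReal.tsum_div_two_pow_succ],
    measure_lt_top m A⟩
  obtain ⟨k, rfl⟩ := Nat.exists_eq_add_of_le' hn
  exact hbind k

/-- **Lemma 3 of the paper.** In the two-component example, for every
measurable `A ⊆ X₁` one has `(κ^n m)(A) = m A / 2^n` for all `n ≥ 1`, and consequently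
`∑_{n ≥ 1} (κ^n m)(A) = m A < ∞`. Here `κ^n m = m.bind (kiter κ n)` is the distribution at
time `n` of the chain started from `m`. -/
theorem stmt13 {X : Type*} [MeasurableSpace X] (m : Measure X) [IsFiniteMeasure m]
    (X₁ X₂ : Set X) (hX₁ : MeasurableSet X₁) (hX₂ : MeasurableSet X₂)
    (hdisj : Disjoint X₁ X₂) (hunion : X₁ ∪ X₂ = Set.univ)
    (hm₁ : 0 < m X₁) (hm₂ : 0 < m X₂)
    (κ : Kernel X X) [IsMarkovKernel κ]
    (hκ₁ : ∀ x ∈ X₁, ∀ B : Set X, MeasurableSet B →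
      κ x B = m (B ∩ X₁) / (2 * m X₁) + m (B ∩ X₂) / (2 * m X₂))
    (hκ₂ : ∀ x ∈ X₂, ∀ B : Set X, MeasurableSet B → κ x B = m (B ∩ X₂) / m X₂) :
    ∀ A : Set X, MeasurableSet A → A ⊆ X₁ →
      (∀ n : ℕ, 1 ≤ n → (m.bind (kiter κ n)) A = m A / 2 ^ n) ∧
        (∑' n : ℕ, (m.bind (kiter κ (n + 1))) A = m A) ∧ m A < ⊤ :=
  stmt13_general m X₁ X₂ hX₁ hdisj hunion hm₁ κ hκ₁ hκ₂
end

section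
/- Let T : [0,1] → [0,1] be the map defined by T(0) = 4/5, T(x) = x² for 0 < x < 1/2, T(x) = 1 − (1−x)² for 1/2 ≤ x < 1, and T(1) = 1/5. Then T has no topologically recurrent points: for every x ∈ [0,1] there exists an open (in [0,1]) set U containing x such that T^t(x) ∉ U for all t ≥ 1. -/
/-!
Away from the two endpoints the orbit of `x` is monotone: on `(0, 1/2)` the map `x ↦ x²`
pushes points down, and on `[1/2, 1)` the map `x ↦ 1 - (1 - x)²` pushes them up, so the intervals
`(0, a]` with `a < 1/2` and `[a, 1)` with `a ≥ 1/2` are forward invariant. Every orbit enters such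
an interval after one step (`T 0 = 4/5`, `T 1 = 1/5`), and that interval is bounded away from
the starting point, which therefore has a neighbourhood the orbit never meets again.
-/

open Set

theorem Set.MapsTo.iterate_notMem_of_disjoint {α : Type*} {f : α → α} {s u : Set α}
    (hs : MapsTo f s s) (hsu : Disjoint s u) {x : α} (hx : f x ∈ s) {t : ℕ} (ht : 1 ≤ t) :
    f^[t] x ∉ u := by
  obtain ⟨n, rfl⟩ := Nat.exists_eq_add_of_le' ht
  rw [Function.iterate_succ_apply]
  exact hsu.notMem_of_mem_left (hs.iterate n hx)

theorem isOpen_preimage_val_inter {α : Type*} [TopologicalSpace α] (A : Set α) {s : Set α}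
    (hs : IsOpen s) : IsOpen (Subtype.val ⁻¹' (A ∩ s) : Set A) := by
  rw [Subtype.preimage_coe_self_inter]
  exact hs.preimage continuous_subtype_val

theorem exists_nbhd_iterate_notMem {α : Type*} [TopologicalSpace α] {T : α → α}
    {A s V : Set α} (hs : MapsTo T s s) (hsV : Disjoint s V) (hV : IsOpen V) {x : α}
    (hx : x ∈ A) (hxV : x ∈ V) (hTx : T x ∈ s) : ∃ U : Set α, U ⊆ A ∧ x ∈ U ∧
      IsOpen (Subtype.val ⁻¹' U : Set A) ∧ ∀ t : ℕ, 1 ≤ t → T^[t] x ∉ U :=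
  ⟨A ∩ V, inter_subset_left, ⟨hx, hxV⟩, isOpen_preimage_val_inter A hV,
    fun _ => hs.iterate_notMem_of_disjoint (hsV.mono_right inter_subset_right) hTx⟩

theorem Ioc_disjoint_Ioi_self {α : Type*} [Preorder α] (a b : α) : Disjoint (Ioc a b) (Ioi b) :=
  (Iic_disjoint_Ioi le_rfl).mono_left Ioc_subset_Iic_self

theorem Ico_disjoint_Iio_self {α : Type*} [Preorder α] (a b : α) : Disjoint (Ico a b) (Iio a) :=
  (Iio_disjoint_Ici le_rfl).symm.mono_left Ico_subset_Ici_self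

theorem mapsTo_Ioc_of_sq {T : ℝ → ℝ} (hT : ∀ x : ℝ, 0 < x → x < 1 / 2 → T x = x ^ 2) {a : ℝ}
    (ha : a < 1 / 2) : MapsTo T (Ioc 0 a) (Ioc 0 a) := by
  rintro y ⟨hy0, hya⟩
  rw [hT y hy0 (hya.trans_lt ha)]
  constructor <;> nlinarith

theorem mapsTo_Ico_of_one_sub_sq {T : ℝ → ℝ}
    (hT : ∀ x : ℝ, 1 / 2 ≤ x → x < 1 → T x = 1 - (1 - x) ^ 2)
    {a : ℝ} (ha : 1 / 2 ≤ a) : MapsTo T (Ico a 1) (Ico a 1) := by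
  rintro y ⟨hay, hy1⟩
  rw [hT y (ha.trans hay) hy1]
  constructor <;> nlinarith

theorem stmt16_general (T : ℝ → ℝ)
    (hT0 : T 0 = 4 / 5)
    (hT1 : ∀ x : ℝ, 0 < x → x < 1 / 2 → T x = x ^ 2)
    (hT2 : ∀ x : ℝ, 1 / 2 ≤ x → x < 1 → T x = 1 - (1 - x) ^ 2)
    (hT3 : T 1 = 1 / 5) :
    ∀ x ∈ Set.Icc (0 : ℝ) 1, ∃ U : Set ℝ, U ⊆ Set.Icc (0 : ℝ) 1 ∧ x ∈ U ∧
      IsOpen (Subtype.val ⁻¹' U : Set (Set.Icc (0 : ℝ) 1)) ∧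
      ∀ t : ℕ, 1 ≤ t → T^[t] x ∉ U := by
  have below {x a : ℝ} (hx : x ∈ Icc (0 : ℝ) 1) (ha : a < 1 / 2) (hax : a < x)
      (hTx : T x ∈ Ioc 0 a) :=
    exists_nbhd_iterate_notMem (mapsTo_Ioc_of_sq hT1 ha) (Ioc_disjoint_Ioi_self 0 a) isOpen_Ioi
      hx hax hTx
  have above {x a : ℝ} (hx : x ∈ Icc (0 : ℝ) 1) (ha : 1 / 2 ≤ a) (hxa : x < a)
      (hTx : T x ∈ Ico a 1) :=
    exists_nbhd_iterate_notMem (mapsTo_Ico_of_one_sub_sq hT2 ha) (Ico_disjoint_Iio_self a 1)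
      isOpen_Iio hx hxa hTx
  intro x hx
  obtain rfl | hx0 := hx.1.eq_or_lt
  · exact above hx (a := 4 / 5) (by norm_num) (by norm_num) (by rw [hT0]; norm_num)
  obtain rfl | hx1 := hx.2.eq_or_lt
  · exact below hx (a := 1 / 5) (by norm_num) (by norm_num) (by rw [hT3]; norm_num)
  obtain hxh | hxh := lt_or_ge x (1 / 2)
  · have hTx := hT1 x hx0 hxh
    exact below hx (a := T x) (by rw [hTx]; nlinarith) (by rw [hTx]; nlinarith)
      ⟨by rw [hTx]; positivity, le_rfl⟩
  · have hTx := hT2 x hxh hx1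
    exact above hx (a := T x) (by rw [hTx]; nlinarith) (by rw [hTx]; nlinarith)
      ⟨le_rfl, by rw [hTx]; nlinarith⟩

/-- **Example 7 of the paper.** The map `T : [0,1] → [0,1]` with `T 0 = 4/5`,
`T x = x²` for `0 < x < 1/2`, `T x = 1 - (1-x)²` for `1/2 ≤ x < 1` and `T 1 = 1/5` has no
topologically recurrent points: every `x ∈ [0,1]` has a relatively open neighborhood `U` in
`[0,1]` which the orbit of `x` never revisits at times `t ≥ 1`. -/
theorem stmt16 (T : ℝ → ℝ) (hmaps : Set.MapsTo T (Set.Icc 0 1) (Set.Icc 0 1))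
    (hT0 : T 0 = 4 / 5)
    (hT1 : ∀ x : ℝ, 0 < x → x < 1 / 2 → T x = x ^ 2)
    (hT2 : ∀ x : ℝ, 1 / 2 ≤ x → x < 1 → T x = 1 - (1 - x) ^ 2)
    (hT3 : T 1 = 1 / 5) :
    ∀ x ∈ Set.Icc (0 : ℝ) 1, ∃ U : Set ℝ, U ⊆ Set.Icc (0 : ℝ) 1 ∧ x ∈ U ∧
      IsOpen (Subtype.val ⁻¹' U : Set (Set.Icc (0 : ℝ) 1)) ∧
      ∀ t : ℕ, 1 ≤ t → T^[t] x ∉ U :=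
  stmt16_general T hT0 hT1 hT2 hT3
end

section
/- Let T : [0,1] → [0,1] be the map defined by T(0) = 4/5, T(x) = x² for 0 < x < 1/2, T(x) = 1 − (1−x)² for 1/2 ≤ x < 1, and T(1) = 1/5. Then there is no T-invariant Borel probability measure on [0,1], i.e. no Borel probability measure μ with μ(T⁻¹(A)) = μ(A) for every Borel set A. -/
/-!
Since `T` maps `[0,1]` into `(0,1)`, an invariant measure `μ` is carried by `(0,1)`. On `(0,1)`,
the `T`-preimage of `(0,a²)` is exactly `(0,a)` for `a ≤ 1/2`, so `μ(0,a²) = μ(0,a)`; iterating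
from `a = 1/2` gives `μ(0,1/2) = μ(0,2^(-2^n)) → 0`. Symmetrically, the preimage of `[1-a²,1)` is
`[1-a,1)`, whence `μ[1/2,1) = 0`, and `μ` vanishes on `(0,1)` — impossible for a probability
measure.
-/

open MeasureTheory Filter Set Topology

theorem tendsto_pow_two_pow_nhds_zero {c : ℝ} (h₀ : 0 ≤ c) (h₁ : c < 1) :
    Tendsto (fun n : ℕ => c ^ 2 ^ n) atTop (𝓝 0) :=
  (tendsto_pow_atTop_nhds_zero_of_lt_one h₀ h₁).comp
    (tendsto_pow_atTop_atTop_of_one_lt one_lt_two)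

theorem antitone_pow_two_pow {c : ℝ} (h₀ : 0 ≤ c) (h₁ : c ≤ 1) : Antitone fun n : ℕ => c ^ 2 ^ n :=
  fun _ _ hmn => pow_le_pow_of_le_one h₀ h₁ (Nat.pow_le_pow_right two_pos hmn)

section Invariant

variable {α : Type*} [MeasurableSpace α] {μ : Measure α} {T : α → α}

theorem measure_eq_of_ae_mem_preimage_iff (hinv : ∀ A, MeasurableSet A → μ (T ⁻¹' A) = μ A)
    {A B : Set α} (hA : MeasurableSet A) (h : ∀ᵐ x ∂μ, T x ∈ A ↔ x ∈ B) : μ A = μ B :=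
  (hinv A hA).symm.trans (measure_congr (eventuallyEq_set.2 h))

theorem ae_mem_of_ae_map_mem (hinv : ∀ A, MeasurableSet A → μ (T ⁻¹' A) = μ A)
    {t : Set α} (ht : MeasurableSet t) (h : ∀ᵐ x ∂μ, T x ∈ t) : ∀ᵐ x ∂μ, x ∈ t := by
  have := measure_eq_of_ae_mem_preimage_iff hinv ht.compl (B := ∅)
    (h.mono fun x hx => by simpa using hx)
  exact ae_iff.2 (this.trans measure_empty)

theorem measure_eq_zero_of_antitone_of_measure_succ [IsFiniteMeasure μ] {s : ℕ → Set α}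
    (hs : Antitone s) (hm : ∀ n, MeasurableSet (s n)) (hempty : ⋂ n, s n = ∅)
    (hsucc : ∀ n, μ (s (n + 1)) = μ (s n)) : μ (s 0) = 0 := by
  have hconst : ∀ n, μ (s n) = μ (s 0) := fun n => by
    induction n with
    | zero => rfl
    | succ n ih => rw [hsucc, ih]
  have := hs.measure_iInter (fun n => (hm n).nullMeasurableSet) ⟨0, measure_ne_top μ _⟩
  simpa [hempty, hconst] using this.symm

theorem measure_eq_zero_of_measure_sq_eq [IsFiniteMeasure μ] {s : ℝ → Set α} (hs : Monotone s)
    (hm : ∀ a, MeasurableSet (s a)) (hempty : ∀ x, ∃ a > 0, x ∉ s a) {c : ℝ} (hc₀ : 0 ≤ c)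
    (hc₁ : c < 1)
    (hsq : ∀ a, 0 ≤ a → a ≤ c → μ (s (a ^ 2)) = μ (s a)) : μ (s c) = 0 := by
  have hiInter : ⋂ n : ℕ, s (c ^ 2 ^ n) = ∅ := eq_empty_of_forall_notMem fun x hx => by
    obtain ⟨a, ha, hxa⟩ := hempty x
    obtain ⟨n, hn⟩ := ((tendsto_pow_two_pow_nhds_zero hc₀ hc₁).eventually (gt_mem_nhds ha)).exists
    exact hxa (hs hn.le (mem_iInter.1 hx n))
  have hsucc (n : ℕ) : μ (s (c ^ 2 ^ (n + 1))) = μ (s (c ^ 2 ^ n)) := by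
    rw [pow_succ, pow_mul]
    exact hsq _ (by positivity) (pow_le_of_le_one hc₀ hc₁.le (by positivity))
  simpa using measure_eq_zero_of_antitone_of_measure_succ
    (hs.comp_antitone (antitone_pow_two_pow hc₀ hc₁.le)) (fun _ => hm _) hiInter hsucc

end Invariant

section Map

variable {T : ℝ → ℝ}

theorem mapsTo_Icc_Ioo (hT0 : T 0 = 4 / 5) (hT1 : ∀ x : ℝ, 0 < x → x < 1 / 2 → T x = x ^ 2)
    (hT2 : ∀ x : ℝ, 1 / 2 ≤ x → x < 1 → T x = 1 - (1 - x) ^ 2) (hT3 : T 1 = 1 / 5) :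
    MapsTo T (Icc 0 1) (Ioo 0 1) := by
  rintro x ⟨hx0, hx1⟩
  rcases hx0.eq_or_lt with rfl | hx0
  · rw [hT0]; norm_num
  rcases hx1.eq_or_lt with rfl | hx1
  · rw [hT3]; norm_num
  rcases lt_or_ge x (1 / 2) with hx | hx
  · rw [hT1 x hx0 hx]; constructor <;> nlinarith
  · rw [hT2 x hx hx1]; constructor <;> nlinarith

theorem map_mem_Ioo_sq_iff (hT1 : ∀ x : ℝ, 0 < x → x < 1 / 2 → T x = x ^ 2)
    (hT2 : ∀ x : ℝ, 1 / 2 ≤ x → x < 1 → T x = 1 - (1 - x) ^ 2) {a x : ℝ} (ha₀ : 0 ≤ a)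
    (ha : a ≤ 1 / 2) (hx : x ∈ Ioo (0 : ℝ) 1) : T x ∈ Ioo 0 (a ^ 2) ↔ x ∈ Ioo 0 a := by
  obtain ⟨hx0, hx1⟩ := hx
  rcases lt_or_ge x (1 / 2) with h | h
  · rw [hT1 x hx0 h]
    simp only [mem_Ioo, hx0, pow_pos hx0 2, sq_lt_sq₀ hx0.le ha₀, true_and]
  · rw [hT2 x h hx1]
    exact iff_of_false (fun h' => by nlinarith [h'.2]) (fun h' => by linarith [h'.2])

theorem map_mem_Ico_one_sub_sq_iff (hT1 : ∀ x : ℝ, 0 < x → x < 1 / 2 → T x = x ^ 2)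
    (hT2 : ∀ x : ℝ, 1 / 2 ≤ x → x < 1 → T x = 1 - (1 - x) ^ 2) {a x : ℝ} (ha₀ : 0 ≤ a)
    (ha : a ≤ 1 / 2) (hx : x ∈ Ioo (0 : ℝ) 1) :
    T x ∈ Ico (1 - a ^ 2) 1 ↔ x ∈ Ico (1 - a) 1 := by
  obtain ⟨hx0, hx1⟩ := hx
  rcases lt_or_ge x (1 / 2) with h | h
  · rw [hT1 x hx0 h]
    exact iff_of_false (fun h' => by nlinarith [h'.1]) (fun h' => by linarith [h'.1])
  · rw [hT2 x h hx1]
    have hsq : 0 < (1 - x) ^ 2 := pow_pos (sub_pos.2 hx1) 2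
    simp only [mem_Ico, hx1, and_true, sub_lt_self_iff, hsq, sub_le_sub_iff_left,
      sq_le_sq₀ (sub_nonneg.2 hx1.le) ha₀]
    constructor <;> intro <;> linarith

end Map

section InvariantMeasure

variable {T : ℝ → ℝ} {μ : Measure ℝ} [IsFiniteMeasure μ]

theorem measure_Ioo_zero_half_eq_zero (hinv : ∀ A, MeasurableSet A → μ (T ⁻¹' A) = μ A)
    (hT1 : ∀ x : ℝ, 0 < x → x < 1 / 2 → T x = x ^ 2)
    (hT2 : ∀ x : ℝ, 1 / 2 ≤ x → x < 1 → T x = 1 - (1 - x) ^ 2)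
    (hμ : ∀ᵐ x ∂μ, x ∈ Ioo (0 : ℝ) 1) : μ (Ioo 0 (1 / 2)) = 0 := by
  refine measure_eq_zero_of_measure_sq_eq (fun _ _ hab => Ioo_subset_Ioo_right hab)
    (fun _ => measurableSet_Ioo) (fun x => ?_) (by norm_num) (by norm_num)
    fun a ha₀ ha => measure_eq_of_ae_mem_preimage_iff hinv measurableSet_Ioo <|
      hμ.mono fun x hx => map_mem_Ioo_sq_iff hT1 hT2 ha₀ ha hx
  rcases le_or_gt x 0 with hx | hx
  · exact ⟨1, one_pos, fun h => hx.not_gt h.1⟩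
  · exact ⟨x, hx, fun h => h.2.false⟩

theorem measure_Ico_half_one_eq_zero (hinv : ∀ A, MeasurableSet A → μ (T ⁻¹' A) = μ A)
    (hT1 : ∀ x : ℝ, 0 < x → x < 1 / 2 → T x = x ^ 2)
    (hT2 : ∀ x : ℝ, 1 / 2 ≤ x → x < 1 → T x = 1 - (1 - x) ^ 2)
    (hμ : ∀ᵐ x ∂μ, x ∈ Ioo (0 : ℝ) 1) : μ (Ico (1 / 2) 1) = 0 := by
  rw [show Ico (1 / 2 : ℝ) 1 = Ico (1 - 1 / 2) 1 by norm_num]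
  refine measure_eq_zero_of_measure_sq_eq (s := fun a => Ico (1 - a) 1)
    (fun _ _ hab => Ico_subset_Ico_left (sub_le_sub_left hab 1))
    (fun _ => measurableSet_Ico) (fun x => ?_) (by norm_num) (by norm_num)
    fun a ha₀ ha => measure_eq_of_ae_mem_preimage_iff hinv measurableSet_Ico <|
      hμ.mono fun x hx => map_mem_Ico_one_sub_sq_iff hT1 hT2 ha₀ ha hx
  rcases lt_or_ge x 1 with hx | hx
  · exact ⟨(1 - x) / 2, by linarith, fun h => by linarith [h.1]⟩
  · exact ⟨1, one_pos, fun h => hx.not_gt h.2⟩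

end InvariantMeasure

theorem stmt17_general (T : ℝ → ℝ)
    (hT0 : T 0 = 4 / 5)
    (hT1 : ∀ x : ℝ, 0 < x → x < 1 / 2 → T x = x ^ 2)
    (hT2 : ∀ x : ℝ, 1 / 2 ≤ x → x < 1 → T x = 1 - (1 - x) ^ 2)
    (hT3 : T 1 = 1 / 5) :
    ¬ ∃ μ : Measure ℝ, IsProbabilityMeasure μ ∧ μ (Set.Icc (0 : ℝ) 1)ᶜ = 0 ∧
      ∀ A : Set ℝ, MeasurableSet A → μ (T ⁻¹' A) = μ A := by
  rintro ⟨μ, hprob, hnull, hinv⟩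
  have hμ : ∀ᵐ x ∂μ, x ∈ Ioo (0 : ℝ) 1 := ae_mem_of_ae_map_mem hinv measurableSet_Ioo <|
    (ae_iff.2 hnull).mono (mapsTo_Icc_Ioo hT0 hT1 hT2 hT3)
  have hIoo : μ (Ioo 0 1) = 0 := by
    rw [← Ioo_union_Ico_eq_Ioo (b := 1 / 2) (by norm_num) (by norm_num)]
    exact measure_union_null (measure_Ioo_zero_half_eq_zero hinv hT1 hT2 hμ)
      (measure_Ico_half_one_eq_zero hinv hT1 hT2 hμ)
  have huniv : μ (Ioo 0 1) = μ univ :=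
    (ae_iff_measure_eq measurableSet_Ioo.nullMeasurableSet).1 hμ
  rw [hIoo, measure_univ] at huniv
  exact zero_ne_one huniv

/-- The map `T : [0,1] → [0,1]` with `T 0 = 4/5`, `T x = x²` for
`0 < x < 1/2`, `T x = 1 - (1-x)²` for `1/2 ≤ x < 1` and `T 1 = 1/5` admits no invariant Borel
probability measure on `[0,1]`: there is no Borel probability measure `μ` carried by `[0,1]`
with `μ (T⁻¹ A) = μ A` for every Borel set `A`. -/
theorem stmt17 (T : ℝ → ℝ) (hmeas : Measurable T)
    (hmaps : Set.MapsTo T (Set.Icc 0 1) (Set.Icc 0 1))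
    (hT0 : T 0 = 4 / 5)
    (hT1 : ∀ x : ℝ, 0 < x → x < 1 / 2 → T x = x ^ 2)
    (hT2 : ∀ x : ℝ, 1 / 2 ≤ x → x < 1 → T x = 1 - (1 - x) ^ 2)
    (hT3 : T 1 = 1 / 5) :
    ¬ ∃ μ : Measure ℝ, IsProbabilityMeasure μ ∧ μ (Set.Icc (0 : ℝ) 1)ᶜ = 0 ∧
      ∀ A : Set ℝ, MeasurableSet A → μ (T ⁻¹' A) = μ A :=
  stmt17_general T hT0 hT1 hT2 hT3
end
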